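/- Let k ≥ 3 and let D be a super-orientation of the complement of C_{2k+1}, with vertices labeled x_0,…,x_{2k} so that x_i and x_j are adjacent in the underlying graph if and only if j − i ≢ ±1 (mod 2k+1). Let D' be the digraph obtained from D by deleting the vertices x_0 and x_1 and deleting every arc between x_2 and x_{2k} (so D' is a super-orientation of the complement of C_{2k−1}). If D' has a path partition orthogonal to {x_2, x_{2k}}, then D has a path partition orthogonal to {x_0, x_{2k}}. -/

import Mathlib

/-- A directed path in a digraph with arc relation `A`: a nonempty list of distinct
vertices each of which dominates the next. -/
def IsDipath {V : Type*} (A : V → V → Prop) (p : List V) : Prop :=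
  p ≠ [] ∧ p.Nodup ∧ p.Chain' A

/-- A path partition of the digraph `(V, A)`: a collection of vertex-disjoint directed
paths covering all of `V`. -/
def IsPathPartition {V : Type*} (A : V → V → Prop) (P : Set (List V)) : Prop :=
  (∀ p ∈ P, IsDipath A p) ∧
  (∀ p ∈ P, ∀ q ∈ P, p ≠ q → ∀ v : V, v ∈ p → v ∉ q) ∧
  (∀ v : V, ∃ p ∈ P, v ∈ p)

/-- A path partition `P` and a stable set `S` are orthogonal if every path of `P`
contains exactly one vertex of `S`. -/
def OrthogonalPP {V : Type*} (P : Set (List V)) (S : Set V) : Prop :=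
  ∀ p ∈ P, ∃! v : V, v ∈ S ∧ v ∈ p

/-- A directed path of the subdigraph induced by the vertex set `W`. -/
def IsDipathOn {V : Type*} (A : V → V → Prop) (W : Set V) (p : List V) : Prop :=
  p ≠ [] ∧ p.Nodup ∧ (∀ v ∈ p, v ∈ W) ∧ p.Chain' A

/-- A path partition of the subdigraph induced by the vertex set `W`. -/
def IsPathPartitionOn {V : Type*} (A : V → V → Prop) (W : Set V) (P : Set (List V)) : Prop :=
  (∀ p ∈ P, IsDipathOn A W p) ∧
  (∀ p ∈ P, ∀ q ∈ P, p ≠ q → ∀ v : V, v ∈ p → v ∉ q) ∧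
  (∀ v ∈ W, ∃ p ∈ P, v ∈ p)

/-- A stable set: a set of pairwise non-adjacent vertices. -/
def IsStableSet {V : Type*} (A : V → V → Prop) (S : Set V) : Prop :=
  ∀ u ∈ S, ∀ v ∈ S, u ≠ v → ¬ A u v ∧ ¬ A v u

/-- A digraph is α-diperfect if for every induced subdigraph (on a vertex set `W`) and
every maximum stable set `S` of it, there is a path partition of it orthogonal to `S`. -/
def AlphaDiperfect {V : Type*} (A : V → V → Prop) : Prop :=
  ∀ (W S : Set V), S ⊆ W → IsStableSet A S →
    (∀ T ⊆ W, IsStableSet A T → T.ncard ≤ S.ncard) →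
    ∃ P : Set (List V), IsPathPartitionOn A W P ∧ OrthogonalPP P S

/-!
By orthogonality the partition of `D'` consists of exactly two paths, `p` through `x_2` and
`q` through `x_{2k}`. In the complement of the cycle, `x_0` is adjacent to every vertex except
`x_1, x_{2k}`, so to all of `p`, and `x_1` to every vertex except `x_0, x_2`, so to all of `q`.
A vertex adjacent to all vertices of a path can always be inserted into it (just before its
first out-neighbour on the path); inserting `x_0` into `p` and `x_1` into `q` gives the
required partition of `D`.
-/

namespace List

variable {α : Type*} {R : α → α → Prop} {x : α}

theorem exists_perm_cons_isChain {l : List α} (hl : l.IsChain R)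
    (hx : ∀ v ∈ l, R x v ∨ R v x) :
    ∃ r : List α, r.Perm (x :: l) ∧ r.IsChain R ∧
      (r.head? = some x ∨ r.head? = l.head?) := by
  induction l with
  | nil => exact ⟨[x], Perm.refl _, .singleton x, .inl rfl⟩
  | cons a t ih =>
    by_cases hxa : R x a
    · exact ⟨x :: a :: t, Perm.refl _, isChain_cons_cons.2 ⟨hxa, hl⟩, .inl rfl⟩
    have hax : R a x := (hx a mem_cons_self).resolve_left hxa
    obtain ⟨r, hperm, hr, hhead⟩ := ih hl.tail fun v hv => hx v (mem_cons_of_mem a hv)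
    refine ⟨a :: r, (hperm.cons a).trans (.swap x a t), isChain_cons.2 ⟨?_, hr⟩, .inr rfl⟩
    rcases hhead with hhead | hhead <;> rw [hhead]
    · rintro b ⟨⟩
      exact hax
    · exact (isChain_cons.1 hl).1

end List

section PathPartition

variable {V : Type*} {A : V → V → Prop}

theorem IsDipathOn.exists_insert {A' : V → V → Prop} {W : Set V} {p : List V} {x : V}
    (hp : IsDipathOn A' W p) (hA : ∀ u v, A' u v → A u v) (hxW : x ∉ W)
    (hx : ∀ v ∈ p, A x v ∨ A v x) :
    ∃ r : List V, IsDipath A r ∧ r.Perm (x :: p) := by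
  obtain ⟨-, hnodup, hpW, hchain⟩ := hp
  obtain ⟨r, hperm, hr, -⟩ :=
    List.exists_perm_cons_isChain (hchain.imp fun _ _ => hA _ _) hx
  have hxp : x ∉ p := fun h => hxW (hpW x h)
  exact ⟨r, ⟨List.ne_nil_of_mem (hperm.mem_iff.2 List.mem_cons_self),
    hperm.nodup_iff.2 (List.nodup_cons.2 ⟨hxp, hnodup⟩), hr⟩, hperm⟩

theorem IsPathPartitionOn.eq_of_mem {W : Set V} {P : Set (List V)}
    (hP : IsPathPartitionOn A W P) {p q : List V} (hp : p ∈ P) (hq : q ∈ P) {v : V}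
    (hvp : v ∈ p) (hvq : v ∈ q) : p = q := by
  by_contra hpq
  exact hP.2.1 p hp q hq hpq v hvp hvq

theorem IsPathPartitionOn.exists_pair_of_orthogonalPP {W : Set V} {P : Set (List V)}
    {s t : V} (hP : IsPathPartitionOn A W P) (horth : OrthogonalPP P {s, t})
    (hs : s ∈ W) (ht : t ∈ W) (hst : s ≠ t) :
    ∃ p q : List V, IsDipathOn A W p ∧ IsDipathOn A W q ∧ s ∈ p ∧ t ∉ p ∧ t ∈ q ∧ s ∉ q ∧
      p.Disjoint q ∧ ∀ v ∈ W, v ∈ p ∨ v ∈ q := by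
  obtain ⟨p, hpP, hsp⟩ := hP.2.2 s hs
  obtain ⟨q, hqP, htq⟩ := hP.2.2 t ht
  have htp : t ∉ p := fun h => hst ((horth p hpP).unique ⟨.inl rfl, hsp⟩ ⟨.inr rfl, h⟩)
  have hsq : s ∉ q := fun h => hst ((horth q hqP).unique ⟨.inl rfl, h⟩ ⟨.inr rfl, htq⟩)
  have hpq : p ≠ q := fun h => hsq (h ▸ hsp)
  have hP_eq : ∀ r ∈ P, r = p ∨ r = q := by
    intro r hr
    obtain ⟨u, ⟨rfl | rfl, hur⟩, -⟩ := horth r hr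
    · exact .inl (hP.eq_of_mem hr hpP hur hsp)
    · exact .inr (hP.eq_of_mem hr hqP hur htq)
  refine ⟨p, q, hP.1 p hpP, hP.1 q hqP, hsp, htp, htq, hsq, hP.2.1 p hpP q hqP hpq, ?_⟩
  intro v hv
  obtain ⟨r, hrP, hvr⟩ := hP.2.2 v hv
  rcases hP_eq r hrP with rfl | rfl
  exacts [.inl hvr, .inr hvr]

theorem isPathPartition_pair {p q : List V} (hp : IsDipath A p) (hq : IsDipath A q)
    (hpq : p.Disjoint q) (hcover : ∀ v, v ∈ p ∨ v ∈ q) : IsPathPartition A {p, q} := by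
  refine ⟨by rintro r (rfl | rfl) <;> assumption, ?_, fun v => ?_⟩
  · rintro r (rfl | rfl) r' (rfl | rfl) hne v hv
    exacts [absurd rfl hne, hpq hv, fun h => hpq h hv, absurd rfl hne]
  · rcases hcover v with h | h
    exacts [⟨p, .inl rfl, h⟩, ⟨q, .inr rfl, h⟩]

theorem orthogonalPP_pair {p q : List V} {s t : V} (hpq : p.Disjoint q) (hs : s ∈ p)
    (ht : t ∈ q) : OrthogonalPP {p, q} {s, t} := by
  rintro r (rfl | rfl)
  · refine ⟨s, ⟨.inl rfl, hs⟩, ?_⟩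
    rintro u ⟨rfl | rfl, hu⟩
    exacts [rfl, absurd ht (hpq hu)]
  · refine ⟨t, ⟨.inr rfl, ht⟩, ?_⟩
    rintro u ⟨rfl | rfl, hu⟩
    exacts [absurd hu (hpq hs), rfl]

theorem exists_orthogonal_pathPartition_of_insert_pair {A' : V → V → Prop} {x y t : V}
    {p q : List V} (hA : ∀ u v, A' u v → A u v) (hxy : x ≠ y)
    (hp : IsDipathOn A' {w | w ≠ x ∧ w ≠ y} p) (hq : IsDipathOn A' {w | w ≠ x ∧ w ≠ y} q)
    (hpq : p.Disjoint q) (hcover : ∀ v, v ≠ x → v ≠ y → v ∈ p ∨ v ∈ q) (ht : t ∈ q)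
    (hxp : ∀ v ∈ p, A x v ∨ A v x) (hyq : ∀ v ∈ q, A y v ∨ A v y) :
    ∃ P : Set (List V), IsPathPartition A P ∧ OrthogonalPP P {x, t} := by
  obtain ⟨r₀, hr₀, hr₀p⟩ := hp.exists_insert hA (fun h => h.1 rfl) hxp
  obtain ⟨r₁, hr₁, hr₁q⟩ := hq.exists_insert hA (fun h => h.2 rfl) hyq
  have hdisj : r₀.Disjoint r₁ := by
    rw [hr₀p.disjoint_left, hr₁q.disjoint_right, List.disjoint_cons_left,
      List.disjoint_cons_right, List.mem_cons, not_or]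
    exact ⟨⟨hxy, fun h => (hq.2.2.1 x h).1 rfl⟩, fun h => (hp.2.2.1 y h).2 rfl, hpq⟩
  refine ⟨{r₀, r₁}, isPathPartition_pair hr₀ hr₁ hdisj fun v => ?_, orthogonalPP_pair hdisj
    (hr₀p.mem_iff.2 List.mem_cons_self) (hr₁q.mem_iff.2 (List.mem_cons_of_mem y ht))⟩
  rw [hr₀p.mem_iff, hr₁q.mem_iff, List.mem_cons, List.mem_cons]
  have := hcover v
  tauto

end PathPartition

theorem ZMod.natCast_ne_natCast_of_lt {n a b : ℕ} (ha : a < n) (hb : b < n) (hab : a ≠ b) :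
    (a : ZMod n) ≠ b := by
  rwa [Ne, ZMod.natCast_eq_natCast_iff', Nat.mod_eq_of_lt ha, Nat.mod_eq_of_lt hb]

theorem ZMod.natCast_two_mul_eq_neg_one (k : ℕ) : ((2 * k : ℕ) : ZMod (2 * k + 1)) = -1 :=
  eq_neg_of_add_eq_zero_left (by exact_mod_cast ZMod.natCast_self (2 * k + 1))

/-- let `D` be a super-orientation of `(C_{2k+1})ᶜ`, `k ≥ 3`, and let `D'`
be obtained from `D` by deleting `x_0`, `x_1` and every arc between `x_2` and `x_{2k}`.
If `D'` has a path partition orthogonal to `{x_2, x_{2k}}`, then `D` has a path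
partition orthogonal to `{x_0, x_{2k}}`. -/
theorem stmt_4 (k : ℕ) (hk : 3 ≤ k)
    (A : ZMod (2*k+1) → ZMod (2*k+1) → Prop)
    (hso : ∀ u v : ZMod (2*k+1),
      (A u v ∨ A v u) ↔ (u ≠ v ∧ v - u ≠ 1 ∧ u - v ≠ 1))
    (h : ∃ P : Set (List (ZMod (2*k+1))),
      IsPathPartitionOn
        (fun u v => A u v ∧
          ¬((u = ((2 : ℕ) : ZMod (2*k+1)) ∧ v = ((2*k : ℕ) : ZMod (2*k+1))) ∨
            (u = ((2*k : ℕ) : ZMod (2*k+1)) ∧ v = ((2 : ℕ) : ZMod (2*k+1)))))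
        {w : ZMod (2*k+1) | w ≠ ((0 : ℕ) : ZMod (2*k+1)) ∧ w ≠ ((1 : ℕ) : ZMod (2*k+1))}
        P ∧
      OrthogonalPP P {((2 : ℕ) : ZMod (2*k+1)), ((2*k : ℕ) : ZMod (2*k+1))}) :
    ∃ P : Set (List (ZMod (2*k+1))), IsPathPartition A P ∧
      OrthogonalPP P {((0 : ℕ) : ZMod (2*k+1)), ((2*k : ℕ) : ZMod (2*k+1))} := by
  have hne : ∀ a b : ℕ, a < b ∧ b ≤ 2 * k → (a : ZMod (2 * k + 1)) ≠ b := fun a b hab =>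
    ZMod.natCast_ne_natCast_of_lt (by omega) (by omega) hab.1.ne
  have hneg : ((2 * k : ℕ) : ZMod (2 * k + 1)) = -1 := ZMod.natCast_two_mul_eq_neg_one k
  have hadj : ∀ u v, v ≠ u → v ≠ u + 1 → v ≠ u - 1 → A u v ∨ A v u := fun u v h₀ h₁ h₂ =>
    (hso u v).2 ⟨h₀.symm, fun h => h₁ (by linear_combination h),
      fun h => h₂ (by linear_combination -h)⟩
  obtain ⟨P, hP, horth⟩ := h
  obtain ⟨p, q, hp, hq, -, hp_neg, hq_neg, hq_two, hpq, hcover⟩ :=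
    hP.exists_pair_of_orthogonalPP horth
      ⟨(hne 0 2 (by omega)).symm, (hne 1 2 (by omega)).symm⟩
      ⟨(hne 0 (2 * k) (by omega)).symm, (hne 1 (2 * k) (by omega)).symm⟩
      (hne 2 (2 * k) (by omega))
  refine exists_orthogonal_pathPartition_of_insert_pair (fun _ _ h => h.1) (hne 0 1 (by omega))
    hp hq hpq (fun v h₀ h₁ => hcover v ⟨h₀, h₁⟩) hq_neg (fun v hv => ?_) (fun v hv => ?_)
  · obtain ⟨hv₀, hv₁⟩ := hp.2.2.1 v hv
    refine hadj _ v hv₀ (by simpa using hv₁) fun h => hp_neg ?_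
    rwa [h, Nat.cast_zero, zero_sub, ← hneg] at hv
  · obtain ⟨hv₀, hv₁⟩ := hq.2.2.1 v hv
    refine hadj _ v hv₁ (fun h => hq_two ?_) (by simpa using hv₀)
    simpa [h, one_add_one_eq_two] using hv
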